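/- Let ν ≥ μ > 0. There is a constant C depending only on ν and μ such that for all t ≥ 0 and all ξ, η ∈ ℝ³ with (|ξ−η|, |η|) ≠ (0, 0): | e^{−(ν|ξ−η|² + μ|η|²)t} − e^{−(μ|ξ−η|² + ν|η|²)t} | ≤ C e^{−(μ/2)(|ξ−η|² + |η|²)t} · ( | |ξ−η|² − |η|² | / ( |ξ−η|² + |η|² ) ). -/

import Mathlib

open MeasureTheory Real
open scoped Topology

noncomputable section

abbrev E3 : Type := EuclideanSpace ℝ (Fin 3)
abbrev C3 : Type := EuclideanSpace ℂ (Fin 3)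

/-- Partial derivative in direction `i`. -/
def pd {F : Type*} [NormedAddCommGroup F] [NormedSpace ℝ F] (i : Fin 3) (f : E3 → F) : E3 → F :=
  fun x => fderiv ℝ f x (EuclideanSpace.single i 1)

/-- Multi-index derivative `∂₀^a ∂₁^b ∂₂^c`. -/
def md {F : Type*} [NormedAddCommGroup F] [NormedSpace ℝ F] (a b c : ℕ) (f : E3 → F) : E3 → F :=
  (pd 0)^[a] ((pd 1)^[b] ((pd 2)^[c] f))

/-- Multi-indices `(a,b,c)` of total order at most `m`. -/
def idxs (m : ℕ) : Finset (ℕ × ℕ × ℕ) :=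
  (Finset.range (m+1) ×ˢ Finset.range (m+1) ×ˢ Finset.range (m+1)).filter
    (fun p => p.1 + p.2.1 + p.2.2 ≤ m)

/-- `L²` norm. -/
def L2norm {F : Type*} [NormedAddCommGroup F] (f : E3 → F) : ℝ :=
  (∫ x : E3, ‖f x‖ ^ 2) ^ ((1:ℝ)/2)

/-- `L^∞` norm. -/
def LinfNorm {F : Type*} [NormedAddCommGroup F] (f : E3 → F) : ℝ :=
  ⨆ x : E3, ‖f x‖

/-- Sobolev `H^m` norm: sum of `L²` norms of all derivatives of order `≤ m`. -/
def HNorm (m : ℕ) {F : Type*} [NormedAddCommGroup F] [NormedSpace ℝ F] (f : E3 → F) : ℝ :=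
  ∑ p ∈ idxs m, L2norm (md p.1 p.2.1 p.2.2 f)

/-- `W^{m,∞}` norm: sum of `L^∞` norms of all derivatives of order `≤ m`. -/
def WInfNorm (m : ℕ) {F : Type*} [NormedAddCommGroup F] [NormedSpace ℝ F] (f : E3 → F) : ℝ :=
  ∑ p ∈ idxs m, LinfNorm (md p.1 p.2.1 p.2.2 f)

/-- divergence of a vector field -/
def divg (f : E3 → E3) : E3 → ℝ := fun x => ∑ i, pd i f x i

def mk3 (a b c : ℝ) : E3 := WithLp.toLp 2 ![a, b, c]

def mk3c (a b c : ℂ) : C3 := WithLp.toLp 2 ![a, b, c]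

/-- curl of a vector field -/
def curl (f : E3 → E3) : E3 → E3 := fun x =>
  mk3 (pd 1 f x 2 - pd 2 f x 1) (pd 2 f x 0 - pd 0 f x 2) (pd 0 f x 1 - pd 1 f x 0)

/-- cross product on ℝ³ -/
def cross (a b : E3) : E3 :=
  mk3 (a 1 * b 2 - a 2 * b 1) (a 2 * b 0 - a 0 * b 2) (a 0 * b 1 - a 1 * b 0)

/-- cross product on ℂ³ (bilinear extension) -/
def crossC (a b : C3) : C3 :=
  mk3c (a 1 * b 2 - a 2 * b 1) (a 2 * b 0 - a 0 * b 2) (a 0 * b 1 - a 1 * b 0)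

/-- gradient of a scalar function -/
def grad (f : E3 → ℝ) : E3 → E3 := fun x => mk3 (pd 0 f x) (pd 1 f x) (pd 2 f x)

/-- Laplacian (componentwise) -/
def lap {F : Type*} [NormedAddCommGroup F] [NormedSpace ℝ F] (f : E3 → F) : E3 → F :=
  fun x => ∑ i, pd i (pd i f) x

/-- Fourier transform, convention `𝓕f(ξ) = (2π)⁻³ ∫ e^{-i x·ξ} f(x) dx`
(so that `𝓕(fg) = 𝓕f * 𝓕g` exactly and `𝓕(∂ⱼf)(ξ) = i ξⱼ 𝓕f(ξ)`). -/
def FT (f : E3 → ℂ) (ξ : E3) : ℂ :=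
  ((2 * Real.pi : ℝ) : ℂ)⁻¹ ^ 3 * ∫ x : E3, Complex.exp (-(Complex.I * ((inner ℝ x ξ : ℝ) : ℂ))) * f x

/-- componentwise Fourier transform of a vector field -/
def FTv (f : E3 → E3) (ξ : E3) : C3 :=
  mk3c (FT (fun x => ((f x 0 : ℝ) : ℂ)) ξ) (FT (fun x => ((f x 1 : ℝ) : ℂ)) ξ)
    (FT (fun x => ((f x 2 : ℝ) : ℂ)) ξ)

/-- heat semigroup `e^{tΔ}` on scalar functions (identity for `t ≤ 0`). -/
def heat (t : ℝ) (f : E3 → ℝ) : E3 → ℝ :=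
  if t ≤ 0 then f else
    fun x => ∫ y : E3, (4 * Real.pi * t) ^ (-(3:ℝ)/2) * Real.exp (-‖x - y‖ ^ 2 / (4 * t)) * f y

/-- heat semigroup `e^{tΔ}`, applied componentwise to a vector field. -/
def heatV (t : ℝ) (f : E3 → E3) : E3 → E3 := fun x =>
  mk3 (heat t (fun y => f y 0) x) (heat t (fun y => f y 1) x) (heat t (fun y => f y 2) x)


/-- rescaled cutoff `χ_{M₀}(x) = χ(x/M₀)` -/
def chiM (M₀ : ℝ) (χ : E3 → ℝ) : E3 → ℝ := fun x => χ (M₀⁻¹ • x)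

/-- multiplication of a vector field by the rescaled cutoff -/
def tilde (M₀ : ℝ) (χ : E3 → ℝ) (f : E3 → E3) : E3 → E3 := fun x => chiM M₀ χ x • f x

/-- `fheat ν α v₀ t = e^{νtΔ}(α v₀)` -/
def fheat (ν α : ℝ) (v₀ : E3 → E3) : ℝ → E3 → E3 :=
  fun t => heatV (ν * t) (fun y => α • v₀ y)

/-- The standing hypotheses on the cutoff function `χ`. -/
def ChiPack (χ : E3 → ℝ) : Prop :=
  ContDiff ℝ (⊤ : ℕ∞) χ ∧ HasCompactSupport χ ∧ (∀ x, |χ x| ≤ 2) ∧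
  (∀ x : E3, ‖x‖ ≤ 1 → χ x = 1) ∧ (∀ x : E3, 2 ≤ ‖x‖ → χ x = 0) ∧
  (∀ k ≤ 5, ∀ x : E3, ‖iteratedFDeriv ℝ k χ x‖ ≤ 2)

/-- The standing hypotheses on the profile `v₀`:  divergence free, `∇×v₀ = √(-Δ) v₀`
(on the Fourier side), Fourier support in the annulus `1-δ ≤ |ξ| ≤ 1+δ`,
`‖v̂₀‖_{L¹} ≤ M₁`, and pointwise decay of derivatives up to order 5. -/
def V0Pack (δ M₁ M₂ : ℝ) (v₀ : SchwartzMap E3 E3) : Prop :=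
  (∀ x, divg (⇑v₀) x = 0) ∧
  (∀ ξ : E3, FTv (curl ⇑v₀) ξ = ‖ξ‖ • FTv (⇑v₀) ξ) ∧
  (∀ ξ : E3, FTv (⇑v₀) ξ ≠ 0 → 1 - δ ≤ ‖ξ‖ ∧ ‖ξ‖ ≤ 1 + δ) ∧
  ((∫ ξ : E3, ‖FTv (⇑v₀) ξ‖) ≤ M₁) ∧
  (∀ k ≤ 5, ∀ x : E3, ‖iteratedFDeriv ℝ k (⇑v₀) x‖ ≤ M₂ / (1 + ‖x‖))

lemma aux_exp_lip (x y : ℝ) (hx : 0 ≤ x) (hy : 0 ≤ y) :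
    |Real.exp (-x) - Real.exp (-y)| ≤ |x - y| := by
  wlog h : x ≤ y generalizing x y
  · rw [abs_sub_comm, abs_sub_comm x y]; exact this y x hy hx (le_of_not_ge h)
  have h1 : Real.exp (-x) ≤ 1 := Real.exp_le_one_iff.mpr (by linarith)
  have h2 : 1 + (x - y) ≤ Real.exp (x - y) := by linarith [Real.add_one_le_exp (x - y)]
  have h3 : Real.exp (-x) * Real.exp (x - y) = Real.exp (-y) := by
    rw [← Real.exp_add]; ring_nf
  have h4 : Real.exp (-y) ≤ Real.exp (-x) := Real.exp_le_exp.mpr (by linarith)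
  have h5 : 0 < Real.exp (-x) := Real.exp_pos _
  rw [abs_of_nonneg (by linarith), abs_of_nonpos (by linarith)]
  nlinarith

lemma aux_s_exp (c s : ℝ) (hc : 0 < c) (hs : 0 ≤ s) :
    s * Real.exp (-(c * s)) ≤ 1 / c := by
  have h1 : c * s + 1 ≤ Real.exp (c * s) := Real.add_one_le_exp _
  have hp : 0 < Real.exp (c * s) := Real.exp_pos _
  rw [Real.exp_neg, ← div_eq_mul_inv, div_le_div_iff₀ hp hc]
  nlinarith

theorem stmt13 (ν μ : ℝ) (hμ : 0 < μ) (hνμ : μ ≤ ν) :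
    ∃ C : ℝ, ∀ t ≥ (0:ℝ), ∀ ξ η : E3, ((‖ξ - η‖, ‖η‖) : ℝ × ℝ) ≠ (0, 0) →
      |Real.exp (-(ν * ‖ξ - η‖ ^ 2 + μ * ‖η‖ ^ 2) * t)
          - Real.exp (-(μ * ‖ξ - η‖ ^ 2 + ν * ‖η‖ ^ 2) * t)|
        ≤ C * Real.exp (-(μ / 2) * (‖ξ - η‖ ^ 2 + ‖η‖ ^ 2) * t)
            * (|‖ξ - η‖ ^ 2 - ‖η‖ ^ 2| / (‖ξ - η‖ ^ 2 + ‖η‖ ^ 2)) := by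
  refine ⟨(ν - μ) * (2 / μ), fun t ht ξ η hne => ?_⟩
  set a := ‖ξ - η‖ ^ 2 with ha
  set b := ‖η‖ ^ 2 with hb
  have ha0 : 0 ≤ a := sq_nonneg _
  have hb0 : 0 ≤ b := sq_nonneg _
  have hab : 0 < a + b := by
    have : ‖ξ - η‖ ≠ 0 ∨ ‖η‖ ≠ 0 := by
      by_contra hc
      push_neg at hc
      exact hne (by simp [hc.1, hc.2])
    rcases this with h | h
    · have : 0 < a := by positivity
      linarith
    · have : 0 < b := by positivity
      linarith
  have e1 : Real.exp (-(ν * a + μ * b) * t)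
      = Real.exp (-(μ * (a + b) * t)) * Real.exp (-((ν - μ) * a * t)) := by
    rw [← Real.exp_add]; ring_nf
  have e2 : Real.exp (-(μ * a + ν * b) * t)
      = Real.exp (-(μ * (a + b) * t)) * Real.exp (-((ν - μ) * b * t)) := by
    rw [← Real.exp_add]; ring_nf
  have key : |Real.exp (-((ν - μ) * a * t)) - Real.exp (-((ν - μ) * b * t))|
      ≤ (ν - μ) * t * |a - b| := by
    have h := aux_exp_lip ((ν - μ) * a * t) ((ν - μ) * b * t)
      (mul_nonneg (mul_nonneg (by linarith) ha0) ht)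
      (mul_nonneg (mul_nonneg (by linarith) hb0) ht)
    calc |Real.exp (-((ν - μ) * a * t)) - Real.exp (-((ν - μ) * b * t))|
        ≤ |(ν - μ) * a * t - (ν - μ) * b * t| := h
      _ = (ν - μ) * t * |a - b| := by
          rw [show (ν - μ) * a * t - (ν - μ) * b * t = ((ν - μ) * t) * (a - b) by ring,
            abs_mul, abs_of_nonneg (mul_nonneg (by linarith) ht)]
  have hs : (a + b) * t * Real.exp (-(μ / 2 * ((a + b) * t))) ≤ 2 / μ := by
    have := aux_s_exp (μ / 2) ((a + b) * t) (by linarith) (mul_nonneg hab.le ht)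
    calc (a + b) * t * Real.exp (-(μ / 2 * ((a + b) * t))) ≤ 1 / (μ / 2) := this
      _ = 2 / μ := by field_simp
  have esplit : Real.exp (-(μ * (a + b) * t))
      = Real.exp (-(μ / 2 * ((a + b) * t))) * Real.exp (-(μ / 2 * ((a + b) * t))) := by
    rw [← Real.exp_add]; ring_nf
  have habs : 0 ≤ |a - b| := abs_nonneg _
  have hexp1 : 0 < Real.exp (-(μ / 2 * ((a + b) * t))) := Real.exp_pos _
  calc |Real.exp (-(ν * a + μ * b) * t) - Real.exp (-(μ * a + ν * b) * t)|
      = Real.exp (-(μ * (a + b) * t))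
        * |Real.exp (-((ν - μ) * a * t)) - Real.exp (-((ν - μ) * b * t))| := by
        rw [e1, e2, ← mul_sub, abs_mul, abs_of_nonneg (Real.exp_pos _).le]
    _ ≤ Real.exp (-(μ * (a + b) * t)) * ((ν - μ) * t * |a - b|) := by
        apply mul_le_mul_of_nonneg_left key (Real.exp_pos _).le
    _ = ((a + b) * t * Real.exp (-(μ / 2 * ((a + b) * t))))
        * ((ν - μ) * Real.exp (-(μ / 2 * ((a + b) * t))) * (|a - b| / (a + b))) := by
        rw [esplit]; field_simp
    _ ≤ (2 / μ) * ((ν - μ) * Real.exp (-(μ / 2 * ((a + b) * t))) * (|a - b| / (a + b))) := by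
        exact mul_le_mul_of_nonneg_right hs
          (mul_nonneg (mul_nonneg (by linarith) hexp1.le) (div_nonneg habs hab.le))
    _ = (ν - μ) * (2 / μ) * Real.exp (-(μ / 2) * (a + b) * t) * (|a - b| / (a + b)) := by
        rw [show -(μ / 2) * (a + b) * t = -(μ / 2 * ((a + b) * t)) by ring]; ring

end
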